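/- An FSA S is not strongly periodically detectable if and only if in its observer S_obs at least one of the following holds: (3) there are a reachable state q of S_obs and x∈q such that |q|>1 and there is a transition sequence x→^{s1}x'→^{s2}x' in S for some s1∈(T_uo)*, s2∈(T_uo)^+, x'∈X; (4) there is a reachable transition cycle of S_obs such that no state in the cycle is a singleton. -/

import Mathlib

/-!
Observer states are the current-state estimates `M.est w`, and `M.est (w ++ v)` depends only on
`M.est w` and `v`. Suppose that after some prefix of an infinite run no estimate is a singleton.
If the run stops producing observations, it ends in an unobservable cycle from a state of a
non-singleton estimate, which is (3). Otherwise, among the next `Nat.card (Set X) + 1`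
estimates two coincide, and the observer path between them is the cycle of (4).

Conversely, each condition yields a lasso `s₀ L L L ⋯` of the automaton along which the
estimates after `s₀` are periodic and never singletons. For (3) the loop `L` is unobservable.
For (4) every state of the first estimate of the cycle has a predecessor in it along the cycle
word, so in a finite automaton one of them lies on a loop reading a power of that word.
-/

/-- A finite-state automaton (FSA) `S = (X, T, X0, δ, Σ, ℓ)`:
states `X`, events `T`, outputs `O` (the alphabet Σ), initial states `init`,
transition relation `delta`, and labeling function `label` where `none` encodes ε. -/
structure FSA (X T O : Type) where
  init : Set X
  delta : X → T → X → Prop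
  label : T → Option O

/-- Composed events of the (ε-extended) self-composition: pairs of observable
events with the same label, unobservable events on the left/right component,
and the added ε event. -/
inductive CEvent (T : Type) where
  | both : T → T → CEvent T
  | left : T → CEvent T
  | right : T → CEvent T
  | eps : CEvent T

namespace FSA

variable {X T O : Type}

/-- Extension of `delta` to finite event sequences: `x →^s x'`. -/
def Run (M : FSA X T O) : X → List T → X → Prop
  | x, [], x' => x = x'
  | x, t :: s, x' => ∃ y, M.delta x t y ∧ Run M y s x'

/-- The label sequence `ℓ(s)` of a finite event sequence. -/
def labelSeq (M : FSA X T O) (s : List T) : List O :=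
  s.filterMap M.label

/-- Membership in `L^ω(S)`: infinite event sequences generated from some initial state. -/
def InLomega (M : FSA X T O) (s : ℕ → T) : Prop :=
  ∃ x : ℕ → X, x 0 ∈ M.init ∧ ∀ i, M.delta (x i) (s i) (x (i + 1))

/-- `s'` is a finite prefix of the infinite sequence `s`. -/
def IsPrefixOf (s' : List T) (s : ℕ → T) : Prop :=
  ∀ i : Fin s'.length, s'.get i = s i

/-- The current-state estimate `M(S,σ)`. -/
def est (M : FSA X T O) (σ : List O) : Set X :=
  {x | ∃ x0 ∈ M.init, ∃ s : List T, M.labelSeq s = σ ∧ M.Run x0 s x}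

/-- Strong periodic detectability (SPD). -/
def SPD (M : FSA X T O) : Prop :=
  ∃ k : ℕ, 0 < k ∧ ∀ s : ℕ → T, M.InLomega s → ∀ s' : List T, IsPrefixOf s' s →
    ∃ s'' : List T, (M.labelSeq s'').length < k ∧ IsPrefixOf (s' ++ s'') s ∧
      (M.est (M.labelSeq (s' ++ s''))).ncard = 1

/-- Strong periodic D-detectability with respect to `Tspec`. -/
def SPDD (M : FSA X T O) (Tspec : Set (X × X)) : Prop :=
  ∃ k : ℕ, 0 < k ∧ ∀ s : ℕ → T, M.InLomega s → ∀ s' : List T, IsPrefixOf s' s →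
    ∃ s'' : List T, (M.labelSeq s'').length < k ∧ IsPrefixOf (s' ++ s'') s ∧
      (M.est (M.labelSeq (s' ++ s'')) ×ˢ M.est (M.labelSeq (s' ++ s''))) ∩ Tspec = ∅

/-- An unobservable transition sequence `x →^s x'` (all events labeled ε). -/
def UnobsRun (M : FSA X T O) (x : X) (s : List T) (x' : X) : Prop :=
  M.Run x s x' ∧ ∀ t ∈ s, M.label t = none

/-- Unobservable reach `UR` of a set of states. -/
def UR (M : FSA X T O) (q : Set X) : Set X :=
  {x' | ∃ x ∈ q, ∃ s : List T, M.UnobsRun x s x'}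

/-- Observable reach `Reach_σ` of a set of states. -/
def ReachO (M : FSA X T O) (σ : O) (q : Set X) : Set X :=
  {x' | ∃ x ∈ q, ∃ t : T, M.delta x t x' ∧ M.label t = some σ}

/-- Initial state `M(S,ε) = UR(X0)` of the observer/detector. -/
def obsInit (M : FSA X T O) : Set X := M.UR M.init

/-- Observer transition `δ_obs(q,σ) = UR(Reach_σ(q))` (defined when nonempty). -/
def obsTrans (M : FSA X T O) (q : Set X) (σ : O) (q' : Set X) : Prop :=
  q' = M.UR (M.ReachO σ q) ∧ q'.Nonempty

/-- Sequences of observer transitions. -/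
def ObsRun (M : FSA X T O) : Set X → List O → Set X → Prop
  | q, [], q' => q = q'
  | q, σ :: w, q' => ∃ q1, M.obsTrans q σ q1 ∧ ObsRun M q1 w q'

/-- Reachable states of the observer `S_obs`. -/
def ObsReachable (M : FSA X T O) (q : Set X) : Prop :=
  ∃ w : List O, M.ObsRun M.obsInit w q

/-- Detector transition relation `δ_det`. -/
def detTrans (M : FSA X T O) (q : Set X) (σ : O) (q' : Set X) : Prop :=
  (1 < (M.UR (M.ReachO σ q)).ncard ∧ q' ⊆ M.UR (M.ReachO σ q) ∧ q'.ncard = 2) ∨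
  ((M.UR (M.ReachO σ q)).ncard = 1 ∧ q' = M.UR (M.ReachO σ q))

/-- Sequences of detector transitions. -/
def DetRun (M : FSA X T O) : Set X → List O → Set X → Prop
  | q, [], q' => q = q'
  | q, σ :: w, q' => ∃ q1, M.detTrans q σ q1 ∧ DetRun M q1 w q'

/-- Reachable states of the detector `S_det`. -/
def DetReachable (M : FSA X T O) (q : Set X) : Prop :=
  ∃ w : List O, M.DetRun M.obsInit w q

/-- The label of a composed event. -/
def cLabel (M : FSA X T O) : CEvent T → Option O
  | CEvent.both t _ => M.label t
  | CEvent.left _ => none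
  | CEvent.right _ => none
  | CEvent.eps => none

/-- The label sequence of a sequence of composed events. -/
def ccLabelSeq (M : FSA X T O) (s : List (CEvent T)) : List O :=
  s.filterMap M.cLabel

/-- Transition relation `δ'` of the self-composition `CC_A(S)`. -/
def ccTrans (M : FSA X T O) : X × X → CEvent T → X × X → Prop
  | p, CEvent.both t t', p' =>
      M.delta p.1 t p'.1 ∧ M.delta p.2 t' p'.2 ∧
      ∃ σ : O, M.label t = some σ ∧ M.label t' = some σ
  | p, CEvent.left t, p' => M.delta p.1 t p'.1 ∧ M.label t = none ∧ p.2 = p'.2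
  | p, CEvent.right t, p' => p.1 = p'.1 ∧ M.label t = none ∧ M.delta p.2 t p'.2
  | _, CEvent.eps, _ => False

/-- Transition relation of the ε-extended self-composition `CC^ε_A(S)`:
all transitions of `CC_A(S)` plus, for `x1 ≠ x2`, the added ε-transitions
`((x1,x2),ε,(x1,x1))` and `((x1,x2),ε,(x2,x2))` under the stated conditions. -/
def ccEpsTrans (M : FSA X T O) (p : X × X) (e : CEvent T) (p' : X × X) : Prop :=
  M.ccTrans p e p' ∨
  (e = CEvent.eps ∧ p.1 ≠ p.2 ∧ (p' = (p.1, p.1) ∨ p' = (p.2, p.2)) ∧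
    ∃ (t' : CEvent T) (r : X × X),
      M.ccTrans p' t' r ∧ ∀ t'' : CEvent T, ¬ M.ccTrans p t'' r)

/-- Sequences of transitions of `CC^ε_A(S)`. -/
def CCRun (M : FSA X T O) : X × X → List (CEvent T) → X × X → Prop
  | p, [], p' => p = p'
  | p, e :: s, p' => ∃ r, M.ccEpsTrans p e r ∧ CCRun M r s p'

/-- Reachable states of `CC^ε_A(S)` (from `X0 × X0`). -/
def CCReachable (M : FSA X T O) (p : X × X) : Prop :=
  ∃ p0 : X × X, p0.1 ∈ M.init ∧ p0.2 ∈ M.init ∧ ∃ s : List (CEvent T), M.CCRun p0 s p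

/-- A state is reachable in `S`. -/
def StateReachable (M : FSA X T O) (x : X) : Prop :=
  ∃ x0 ∈ M.init, ∃ s : List T, M.Run x0 s x

/-- Deadlock-freeness. -/
def DeadlockFree (M : FSA X T O) : Prop :=
  ∀ x : X, M.StateReachable x → ∃ (t : T) (x' : X), M.delta x t x'

/-- Divergence-freeness (promptness): no reachable unobservable transition cycle. -/
def DivergenceFree (M : FSA X T O) : Prop :=
  ∀ x : X, M.StateReachable x → ∀ s : List T, s ≠ [] →
    (∀ t ∈ s, M.label t = none) → ¬ M.Run x s x

end FSA

theorem exists_mem_rel_self_of_forall_exists_rel {α : Type*} [Finite α] {R : α → α → Prop}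
    (htrans : ∀ a b c, R a b → R b c → R a c) {Q : Set α} (hQ : Q.Nonempty)
    (h : ∀ y ∈ Q, ∃ x ∈ Q, R x y) : ∃ x ∈ Q, R x x := by
  by_contra! hirr
  let r : Q → Q → Prop := fun a b => R a b
  have : IsTrans Q r := ⟨fun a b c => htrans a b c⟩
  have : Std.Irrefl r := ⟨fun a => hirr a a.2⟩
  obtain ⟨a, -, hmin⟩ :=
    (Finite.wellFounded_of_trans_of_irrefl r).has_min Set.univ ⟨⟨_, hQ.some_mem⟩, trivial⟩
  obtain ⟨x, hx, hxa⟩ := h a a.2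
  exact hmin ⟨x, hx⟩ trivial hxa

theorem List.prefix_or_exists_of_prefix_append {α : Type*} {p u v : List α} (h : p <+: u ++ v) :
    p <+: u ∨ ∃ p', p = u ++ p' ∧ p' <+: v := by
  obtain ⟨r, hr⟩ := h
  rcases List.append_eq_append_iff.1 hr with ⟨u', rfl, -⟩ | ⟨p', rfl, rfl⟩
  · exact Or.inl (List.prefix_append _ _)
  · exact Or.inr ⟨p', rfl, List.prefix_append _ _⟩

namespace FSA

variable {X T O : Type} {M : FSA X T O}

theorem run_append {x y : X} {a b : List T} :
    M.Run x (a ++ b) y ↔ ∃ z, M.Run x a z ∧ M.Run z b y := by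
  induction a generalizing x with
  | nil => simp [Run]
  | cons t a ih => simp only [List.cons_append, Run, ih]; grind

theorem labelSeq_append (a b : List T) : M.labelSeq (a ++ b) = M.labelSeq a ++ M.labelSeq b :=
  List.filterMap_append

theorem unobsRun_iff {x y : X} {s : List T} :
    M.UnobsRun x s y ↔ M.Run x s y ∧ M.labelSeq s = [] := by
  rw [UnobsRun, labelSeq, List.filterMap_eq_nil_iff]

variable (M) in
def InfRun (f : ℕ → X) (e : Stream' T) : Prop :=
  ∀ i, M.delta (f i) (e.get i) (f (i + 1))

theorem InfRun.run_take {f : ℕ → X} {e : Stream' T} (h : M.InfRun f e) (n : ℕ) :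
    M.Run (f 0) (e.take n) (f n) := by
  induction n with
  | zero => rfl
  | succ n ih => rw [Stream'.take_succ', run_append]; exact ⟨f n, ih, f (n + 1), h n, rfl⟩

theorem InfRun.drop {f : ℕ → X} {e : Stream' T} (h : M.InfRun f e) (n : ℕ) :
    M.InfRun (fun i => f (n + i)) (e.drop n) := fun i => by
  simpa only [Stream'.get_drop, Nat.add_assoc] using h (n + i)

theorem exists_infRun_of_forall_exists_delta (P : X → Stream' T → Prop)
    (hP : ∀ x e, P x e → ∃ y, M.delta x e.head y ∧ P y e.tail) {x : X} {e : Stream' T}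
    (h : P x e) : ∃ f : ℕ → X, f 0 = x ∧ M.InfRun f e := by
  have : Nonempty X := ⟨x⟩
  choose! g hg using hP
  let f : ℕ → X := fun i => Nat.rec x (fun i y => g y (e.drop i)) i
  have hf : ∀ i, P (f i) (e.drop i) := fun i => by
    induction i with
    | zero => exact h
    | succ i ih => simpa using (hg _ _ ih).2
  exact ⟨f, rfl, fun i => by simpa using (hg _ _ (hf i)).1⟩

theorem inLomega_append_cycle {x₀ x : X} {s₀ L : List T} (hx₀ : x₀ ∈ M.init)
    (hs₀ : M.Run x₀ s₀ x) (hL : M.Run x L x) (hne : L ≠ []) :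
    M.InLomega (s₀ ++ₛ Stream'.cycle L hne) := by
  set C := Stream'.cycle L hne
  let P : X → Stream' T → Prop := fun y e => ∃ l, M.Run y l x ∧ e = l ++ₛ C
  have hstep : ∀ y e, P y e → ∃ z, M.delta y e.head z ∧ P z e.tail := by
    rintro y e ⟨l, hl, rfl⟩
    obtain ⟨t, l', hl', hrun⟩ :
        ∃ t l', l ++ₛ C = Stream'.cons t (l' ++ₛ C) ∧ M.Run y (t :: l') x := by
      rcases l with _ | ⟨t, l'⟩
      · obtain ⟨t, L', rfl⟩ := List.exists_cons_of_ne_nil hne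
        cases hl
        exact ⟨t, L', Stream'.cycle_eq _ hne, hL⟩
      · exact ⟨t, l', rfl, hl⟩
    obtain ⟨z, hz, hzx⟩ := hrun
    exact ⟨z, by rw [hl']; exact hz, l', hzx, by rw [hl']; rfl⟩
  obtain ⟨f, hf0, hf⟩ := exists_infRun_of_forall_exists_delta P hstep ⟨s₀, hs₀, rfl⟩
  exact ⟨f, hf0 ▸ hx₀, hf⟩

theorem isPrefixOf_iff_take {l : List T} {s : Stream' T} :
    IsPrefixOf l s ↔ s.take l.length = l := by
  refine ⟨fun h => List.ext_getElem (Stream'.length_take _ _) fun i hi _ => ?_, fun h i => ?_⟩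
  · rw [Stream'.take_get]; exact (h ⟨i, by simpa using hi⟩).symm
  · have := Stream'.take_get (n := l.length) (a := s) (m := i) (by simp)
    simp only [h] at this
    exact this

theorem mem_est_append {w v : List O} {y : X} :
    y ∈ M.est (w ++ v) ↔ ∃ x ∈ M.est w, ∃ s, M.labelSeq s = v ∧ M.Run x s y := by
  constructor
  · rintro ⟨x₀, hx₀, s, hs, hrun⟩
    obtain ⟨s₁, s₂, rfl, hs₁, hs₂⟩ := List.filterMap_eq_append_iff.1 hs
    obtain ⟨x, hx, hy⟩ := run_append.1 hrun
    exact ⟨x, ⟨x₀, hx₀, s₁, hs₁, hx⟩, s₂, hs₂, hy⟩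
  · rintro ⟨x, ⟨x₀, hx₀, s₁, rfl, hx⟩, s₂, rfl, hy⟩
    exact ⟨x₀, hx₀, s₁ ++ s₂, labelSeq_append _ _, run_append.2 ⟨x, hx, hy⟩⟩

theorem est_append_congr {w w' : List O} (h : M.est w = M.est w') (v : List O) :
    M.est (w ++ v) = M.est (w' ++ v) := by
  ext y
  simp only [mem_est_append, h]

theorem est_nonempty_of_prefix {u w : List O} (hu : u <+: w) (hw : (M.est w).Nonempty) :
    (M.est u).Nonempty := by
  obtain ⟨v, rfl⟩ := hu
  obtain ⟨y, hy⟩ := hw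
  obtain ⟨x, hx, -⟩ := mem_est_append.1 hy
  exact ⟨x, hx⟩

theorem mem_est_of_unobsRun {w : List O} {x y : X} {s : List T} (hx : x ∈ M.est w)
    (hs : M.UnobsRun x s y) : y ∈ M.est w := by
  rw [unobsRun_iff] at hs
  simpa using mem_est_append.2 ⟨x, hx, s, hs.2, hs.1⟩

theorem est_concat (w : List O) (o : O) :
    M.est (w ++ [o]) = M.UR (M.ReachO o (M.est w)) := by
  ext y
  rw [mem_est_append]
  constructor
  · rintro ⟨x, hx, s, hs, hrun⟩
    obtain ⟨s₁, t, s₂, rfl, hs₁, ht, hs₂⟩ := List.filterMap_eq_cons_iff.1 hs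
    obtain ⟨x₁, hx₁, z, hz, hy⟩ := run_append.1 hrun
    have hx₁w : x₁ ∈ M.est w := mem_est_of_unobsRun hx ⟨hx₁, hs₁⟩
    exact ⟨z, ⟨x₁, hx₁w, t, hz, ht⟩, s₂, unobsRun_iff.2 ⟨hy, hs₂⟩⟩
  · rintro ⟨z, ⟨x, hx, t, hz, ht⟩, s, hs⟩
    rw [unobsRun_iff] at hs
    refine ⟨x, hx, t :: s, ?_, z, hz, hs.1⟩
    simp [labelSeq, ht, ← hs.2]

theorem est_nil : M.est [] = M.obsInit := by
  ext y
  simp only [obsInit, UR, est, unobsRun_iff, Set.mem_ofPred_eq]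
  grind

theorem obsRun_est {w v : List O} (hv : (M.est (w ++ v)).Nonempty) :
    M.ObsRun (M.est w) v (M.est (w ++ v)) := by
  induction v generalizing w with
  | nil => simp [ObsRun]
  | cons o v ih =>
    have hv' : M.est (w ++ o :: v) = M.est (w ++ [o] ++ v) := by simp
    rw [hv'] at hv ⊢
    exact ⟨_, ⟨est_concat w o, est_nonempty_of_prefix (List.prefix_append _ _) hv⟩, ih hv⟩

theorem eq_est_of_obsRun {w v : List O} {q : Set X} (h : M.ObsRun (M.est w) v q) :
    q = M.est (w ++ v) := by
  induction v generalizing w with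
  | nil => simpa [ObsRun] using h.symm
  | cons o v ih =>
    obtain ⟨q₁, ⟨rfl, -⟩, h⟩ := h
    rw [← est_concat] at h
    simpa using ih h

theorem obsReachable_est {w : List O} (h : (M.est w).Nonempty) : M.ObsReachable (M.est w) :=
  ⟨w, by simpa [est_nil] using obsRun_est (w := []) (v := w) h⟩

theorem ObsReachable.exists_eq_est {q : Set X} (h : M.ObsReachable q) : ∃ w, q = M.est w := by
  obtain ⟨w, hw⟩ := h
  rw [← est_nil] at hw
  exact ⟨w, by simpa using eq_est_of_obsRun hw⟩

variable (M) in
def IsNonsingletonCycle (w u : List O) : Prop :=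
  M.est (w ++ u) = M.est w ∧ ∀ p, p <+: u → (M.est (w ++ p)).ncard ≠ 1

theorem IsNonsingletonCycle.append {w u v : List O} (hu : M.IsNonsingletonCycle w u)
    (hv : M.IsNonsingletonCycle w v) : M.IsNonsingletonCycle w (u ++ v) := by
  have hshift : ∀ p, M.est (w ++ (u ++ p)) = M.est (w ++ p) := fun p => by
    rw [← List.append_assoc, est_append_congr hu.1]
  refine ⟨by rw [hshift, hv.1], fun p hp => ?_⟩
  rcases List.prefix_or_exists_of_prefix_append hp with hp | ⟨p', rfl, hp'⟩
  · exact hu.2 p hp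
  · rw [hshift]; exact hv.2 p' hp'

theorem IsNonsingletonCycle.ncard_est_take_cycle {w : List O} {L : List T} (hne : L ≠ [])
    (hL : M.IsNonsingletonCycle w (M.labelSeq L)) (m : ℕ) :
    (M.est (w ++ M.labelSeq ((Stream'.cycle L hne).take m))).ncard ≠ 1 := by
  induction m using Nat.strong_induction_on with
  | _ m ih =>
    rw [Stream'.cycle_eq]
    rcases le_or_gt m L.length with hm | hm
    · rw [Stream'.take_append_of_le_length (h := hm)]
      exact hL.2 _ ((L.take_prefix m).filterMap _)
    · obtain ⟨r, rfl⟩ := Nat.exists_eq_add_of_lt hm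
      rw [Nat.add_assoc, ← Stream'.append_take, labelSeq_append, ← List.append_assoc,
        est_append_congr hL.1]
      exact ih _ (by have := List.length_pos_iff.2 hne; omega)

theorem not_spd_of_isNonsingletonCycle {w : List O} {x : X} {L : List T} (hx : x ∈ M.est w)
    (hL : M.Run x L x) (hne : L ≠ []) (hc : M.IsNonsingletonCycle w (M.labelSeq L)) :
    ¬ M.SPD := by
  obtain ⟨x₀, hx₀, s₀, rfl, hs₀⟩ := hx
  rintro ⟨k, -, hspd⟩
  obtain ⟨s, -, hpre, hcard⟩ := hspd _ (inLomega_append_cycle hx₀ hs₀ hL hne) s₀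
    (isPrefixOf_iff_take.2 <| by
      rw [Stream'.take_append_of_le_length (h := le_rfl), List.take_length])
  rw [isPrefixOf_iff_take, List.length_append, ← Stream'.append_take] at hpre
  rw [← List.append_cancel_left hpre, labelSeq_append] at hcard
  exact hc.ncard_est_take_cycle hne _ hcard

variable (M) in
def HasNonsingletonDivergence : Prop :=
  ∃ q : Set X, M.ObsReachable q ∧ 1 < q.ncard ∧
    ∃ x ∈ q, ∃ (x' : X) (s1 s2 : List T),
      M.UnobsRun x s1 x' ∧ s2 ≠ [] ∧ M.UnobsRun x' s2 x'

theorem not_spd_of_hasNonsingletonDivergence (h : M.HasNonsingletonDivergence) : ¬ M.SPD := by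
  obtain ⟨q, hq, hcard, x, hx, x', s₁, s₂, hs₁, hne, hs₂⟩ := h
  obtain ⟨w, rfl⟩ := hq.exists_eq_est
  rw [unobsRun_iff] at hs₂
  refine not_spd_of_isNonsingletonCycle (mem_est_of_unobsRun hx hs₁) hs₂.1 hne ?_
  rw [hs₂.2]
  refine ⟨by simp, fun p hp => ?_⟩
  rw [List.prefix_nil.1 hp, List.append_nil]
  omega

variable (M) in
def HasNonsingletonObsCycle : Prop :=
  ∃ (n : ℕ), 0 < n ∧ ∃ (q : Fin (n + 1) → Set X) (σ : Fin n → O),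
    M.ObsReachable (q 0) ∧ q 0 = q (Fin.last n) ∧
    (∀ i : Fin n, M.obsTrans (q i.castSucc) (σ i) (q i.succ)) ∧
    ∀ i : Fin (n + 1), (q i).ncard ≠ 1

theorem eq_est_take_of_obsTrans {n : ℕ} {q : Fin (n + 1) → Set X} {σ : Fin n → O}
    {w : List O} (h0 : q 0 = M.est w)
    (hstep : ∀ i : Fin n, M.obsTrans (q i.castSucc) (σ i) (q i.succ)) (i : Fin (n + 1)) :
    q i = M.est (w ++ (List.ofFn σ).take i) := by
  induction i using Fin.induction with
  | zero => simpa using h0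
  | succ i ih =>
    rw [(hstep i).1, ih, ← est_concat, List.append_assoc, Fin.val_succ,
      ← List.take_concat_get' _ _ (by simp), List.getElem_ofFn, Fin.val_castSucc]

theorem hasNonsingletonObsCycle_iff :
    M.HasNonsingletonObsCycle ↔
      ∃ w v, v ≠ [] ∧ (M.est w).Nonempty ∧ M.IsNonsingletonCycle w v := by
  constructor
  · rintro ⟨n, hn, q, σ, hq, hlast, hstep, hcard⟩
    obtain ⟨w, hw⟩ := hq.exists_eq_est
    have hq_eq := eq_est_take_of_obsTrans hw hstep
    have hv : (List.ofFn σ).take n = List.ofFn σ := List.take_of_length_le (by simp)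
    refine ⟨w, List.ofFn σ, by simpa using hn.ne', ?_, ?_, fun p hp => ?_⟩
    · obtain ⟨m, rfl⟩ := Nat.exists_eq_succ_of_ne_zero hn.ne'
      rw [← hw, hlast]
      simpa using (hstep (Fin.last m)).2
    · simpa [hv, ← hw] using (hq_eq (Fin.last n)).symm.trans hlast.symm
    · have hpn : p.length < n + 1 := by have := hp.length_le; simp at this; omega
      rw [List.prefix_iff_eq_take.1 hp, ← hq_eq ⟨p.length, hpn⟩]
      exact hcard _
  · rintro ⟨w, v, hv, hne, hcyc, hcard⟩
    have hne' : ∀ i, (M.est (w ++ v.take i)).Nonempty := fun i =>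
      est_nonempty_of_prefix ((List.prefix_append_right_inj w).2 (v.take_prefix i))
        (hcyc ▸ hne)
    refine ⟨v.length, List.length_pos_iff.2 hv, fun i => M.est (w ++ v.take i),
      fun i => v[i], by simpa using obsReachable_est hne, by simpa using hcyc.symm,
      fun i => ⟨?_, hne' _⟩, fun i => hcard _ (v.take_prefix i)⟩
    simp [← est_concat]

theorem not_spd_of_hasNonsingletonObsCycle [Finite X] (h : M.HasNonsingletonObsCycle) :
    ¬ M.SPD := by
  obtain ⟨w, v, hv, hne, hcyc⟩ := hasNonsingletonObsCycle_iff.1 h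
  let R : X → X → Prop := fun x y =>
    ∃ s, s ≠ [] ∧ M.IsNonsingletonCycle w (M.labelSeq s) ∧ M.Run x s y
  have htrans : ∀ x y z, R x y → R y z → R x z := by
    rintro x y z ⟨s, hs, hsc, hxy⟩ ⟨s', -, hsc', hyz⟩
    refine ⟨s ++ s', by simp [hs], ?_, run_append.2 ⟨y, hxy, hyz⟩⟩
    rw [labelSeq_append]
    exact hsc.append hsc'
  have hpred : ∀ y ∈ M.est w, ∃ x ∈ M.est w, R x y := by
    intro y hy
    rw [← hcyc.1, mem_est_append] at hy
    obtain ⟨x, hx, s, rfl, hxy⟩ := hy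
    exact ⟨x, hx, s, by rintro rfl; exact hv rfl, hcyc, hxy⟩
  obtain ⟨x, hx, L, hL, hLc, hxx⟩ := exists_mem_rel_self_of_forall_exists_rel htrans hne hpred
  exact not_spd_of_isNonsingletonCycle hx hxx hL hLc

theorem hasNonsingletonDivergence_of_infRun [Finite X] {w : List O} {f : ℕ → X}
    {e : Stream' T} (hf0 : f 0 ∈ M.est w) (hf : M.InfRun f e)
    (he : ∀ i, M.label (e.get i) = none) (hcard : (M.est w).ncard ≠ 1) :
    M.HasNonsingletonDivergence := by
  obtain ⟨a, b, hab, hfab⟩ : ∃ a b, a < b ∧ f a = f b := by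
    obtain ⟨a, b, hne, heq⟩ := Finite.exists_ne_map_eq_of_infinite f
    rcases hne.lt_or_gt with h | h
    exacts [⟨a, b, h, heq⟩, ⟨b, a, h, heq.symm⟩]
  have hunobs : ∀ n k, ∀ t ∈ (e.drop k).take n, M.label t = none := by
    intro n k t ht
    obtain ⟨i, hi, rfl⟩ := List.getElem_of_mem ht
    rw [Stream'.take_get, Stream'.get_drop]
    exact he _
  have hloop : M.Run (f a) ((e.drop a).take (b - a)) (f a) := by
    simpa [Nat.add_sub_cancel' hab.le, ← hfab] using (hf.drop a).run_take (b - a)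
  refine ⟨M.est w, obsReachable_est ⟨_, hf0⟩, ?_, f 0, hf0, f a, e.take a,
    (e.drop a).take (b - a), ⟨hf.run_take a, hunobs a 0⟩,
    List.ne_nil_of_length_pos (by simpa using hab), hloop, hunobs _ a⟩
  have := (Set.ncard_pos (Set.toFinite _)).2 ⟨_, hf0⟩
  omega

theorem exists_prefix_ncard_est_eq_one [Finite X] (h4 : ¬ M.HasNonsingletonObsCycle)
    {w v : List O} (hne : (M.est (w ++ v)).Nonempty) (hv : Nat.card (Set X) ≤ v.length) :
    ∃ u, u <+: v ∧ u.length ≤ Nat.card (Set X) ∧ (M.est (w ++ u)).ncard = 1 := by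
  by_contra! hcard
  set K := Nat.card (Set X)
  obtain ⟨a, b, hab, hbK, heq⟩ : ∃ a b, a < b ∧ b ≤ K ∧
      M.est (w ++ v.take a) = M.est (w ++ v.take b) := by
    have hninj : ¬ Function.Injective fun d : Fin (K + 1) => M.est (w ++ v.take d) :=
      fun hinj => by simpa [K] using Nat.card_le_card_of_injective _ hinj
    simp only [Function.Injective, not_forall] at hninj
    obtain ⟨a, b, heq, hne⟩ := hninj
    rcases Fin.val_ne_iff.2 hne |>.lt_or_gt with h | h
    exacts [⟨a, b, h, by omega, heq⟩, ⟨b, a, h, by omega, heq.symm⟩]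
  have hsplit : v.take a ++ (v.take b).drop a = v.take b := by
    conv_rhs => rw [← List.take_append_drop a (v.take b)]
    rw [List.take_take, min_eq_left hab.le]
  apply h4
  rw [hasNonsingletonObsCycle_iff]
  refine ⟨w ++ v.take a, (v.take b).drop a, ?_, ?_, ?_, fun p hp => ?_⟩
  · apply List.ne_nil_of_length_pos
    simp only [List.length_drop, List.length_take]
    omega
  · exact est_nonempty_of_prefix ((List.prefix_append_right_inj w).2 (v.take_prefix a)) hne
  · rw [List.append_assoc, hsplit, heq]
  · have hpv : v.take a ++ p <+: v := by
      refine List.IsPrefix.trans ?_ (v.take_prefix b)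
      rw [← hsplit]
      exact (List.prefix_append_right_inj _).2 hp
    have hplen := hp.length_le
    simp only [List.length_drop, List.length_take] at hplen
    rw [List.append_assoc]
    exact hcard _ hpv (by simp; omega)

theorem exists_labelSeq_take_eq {e : Stream' T} {j : ℕ} {u : List O}
    (hu : u <+: M.labelSeq (e.take j)) : ∃ m, M.labelSeq (e.take m) = u := by
  induction j with
  | zero => exact ⟨0, (List.prefix_nil.1 hu).symm⟩
  | succ j ih =>
    rw [Stream'.take_succ', labelSeq_append] at hu
    rcases hl : M.label (e.get j) with _ | o
    · exact ih (by simpa [labelSeq, hl] using hu)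
    · rcases List.prefix_concat_iff.1 (by simpa [labelSeq, hl] using hu) with rfl | hu
      · refine ⟨j + 1, ?_⟩
        rw [Stream'.take_succ', labelSeq_append]
        simp [labelSeq, hl]
      · exact ih hu

theorem exists_forall_label_eq_none_of_length_lt {e : Stream' T} {K : ℕ}
    (h : ∀ m, (M.labelSeq (e.take m)).length < K) :
    ∃ m, ∀ i, m ≤ i → M.label (e.get i) = none := by
  by_contra! hinf
  have hgrow : ∀ N, ∃ m, N ≤ (M.labelSeq (e.take m)).length := by
    intro N
    induction N with
    | zero => exact ⟨0, Nat.zero_le _⟩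
    | succ N ih =>
      obtain ⟨m, hm⟩ := ih
      obtain ⟨i, hmi, hi⟩ := hinf m
      obtain ⟨o, ho⟩ := Option.ne_none_iff_exists'.1 hi
      have hmono : (M.labelSeq (e.take m)).length ≤ (M.labelSeq (e.take i)).length :=
        ((Stream'.take_prefix_take_left m i e hmi).filterMap M.label).length_le
      have hlast : M.labelSeq [e.get i] = [o] := by simp [labelSeq, ho]
      refine ⟨i + 1, ?_⟩
      rw [Stream'.take_succ', labelSeq_append, List.length_append, hlast, List.length_singleton]
      omega
  obtain ⟨m, hm⟩ := hgrow K
  exact (h m).not_ge hm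

theorem exists_take_ncard_est_eq_one [Finite X] (h3 : ¬ M.HasNonsingletonDivergence)
    (h4 : ¬ M.HasNonsingletonObsCycle) {w : List O} {f : ℕ → X} {e : Stream' T}
    (hf0 : f 0 ∈ M.est w) (hf : M.InfRun f e) :
    ∃ m, (M.labelSeq (e.take m)).length ≤ Nat.card (Set X) ∧
      (M.est (w ++ M.labelSeq (e.take m))).ncard = 1 := by
  have hmem : ∀ m, f m ∈ M.est (w ++ M.labelSeq (e.take m)) := fun m =>
    mem_est_append.2 ⟨f 0, hf0, _, rfl, hf.run_take m⟩
  by_cases hlong : ∃ j, Nat.card (Set X) ≤ (M.labelSeq (e.take j)).length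
  · obtain ⟨j, hj⟩ := hlong
    obtain ⟨u, hu, hlen, hcard⟩ := exists_prefix_ncard_est_eq_one h4 ⟨_, hmem j⟩ hj
    obtain ⟨m, rfl⟩ := exists_labelSeq_take_eq hu
    exact ⟨m, hlen, hcard⟩
  · push Not at hlong
    obtain ⟨m, hm⟩ := exists_forall_label_eq_none_of_length_lt hlong
    refine ⟨m, (hlong m).le, by_contra fun hcard => h3 ?_⟩
    refine hasNonsingletonDivergence_of_infRun (hmem m) (hf.drop m) (fun i => ?_) hcard
    rw [Stream'.get_drop]
    exact hm _ (Nat.le_add_right _ _)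

theorem spd_of_not_hasNonsingletonDivergence_of_not_hasNonsingletonObsCycle [Finite X]
    (h3 : ¬ M.HasNonsingletonDivergence) (h4 : ¬ M.HasNonsingletonObsCycle) : M.SPD := by
  refine ⟨Nat.card (Set X) + 1, Nat.succ_pos _, ?_⟩
  rintro (s : Stream' T) ⟨f, hf0, hf⟩ s' hs'
  have hf : M.InfRun f s := hf
  rw [isPrefixOf_iff_take] at hs'
  have hmem : f s'.length ∈ M.est (M.labelSeq s') :=
    ⟨f 0, hf0, s', rfl, by simpa [hs'] using hf.run_take s'.length⟩
  obtain ⟨m, hlen, hcard⟩ := exists_take_ncard_est_eq_one h3 h4 hmem (hf.drop s'.length)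
  refine ⟨_, Nat.lt_succ_of_le hlen, ?_, by rwa [labelSeq_append]⟩
  rw [isPrefixOf_iff_take, List.length_append, Stream'.take_add, hs', Stream'.length_take]

end FSA

theorem not_spd_iff_observer_general {X T O : Type} [Fintype X]
    (M : FSA X T O) :
    ¬ M.SPD ↔
      ((∃ q : Set X, M.ObsReachable q ∧ 1 < q.ncard ∧
          ∃ x ∈ q, ∃ (x' : X) (s1 s2 : List T),
            M.UnobsRun x s1 x' ∧ s2 ≠ [] ∧ M.UnobsRun x' s2 x') ∨
       (∃ (n : ℕ), 0 < n ∧ ∃ (q : Fin (n + 1) → Set X) (σ : Fin n → O),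
          M.ObsReachable (q 0) ∧ q 0 = q (Fin.last n) ∧
          (∀ i : Fin n, M.obsTrans (q i.castSucc) (σ i) (q i.succ)) ∧
          ∀ i : Fin (n + 1), (q i).ncard ≠ 1)) := by
  refine ⟨fun h => ?_, ?_⟩
  · by_contra hc
    rw [not_or] at hc
    exact h (FSA.spd_of_not_hasNonsingletonDivergence_of_not_hasNonsingletonObsCycle hc.1 hc.2)
  · rintro (h | h)
    exacts [FSA.not_spd_of_hasNonsingletonDivergence h, FSA.not_spd_of_hasNonsingletonObsCycle h]

/-- `S` is not SPD iff in its observer `S_obs`: (3) there are a reachable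
state `q` and `x ∈ q` with `|q| > 1` and a transition sequence `x →^{s1} x' →^{s2} x'`
in `S` with `s1 ∈ (T_uo)*`, `s2 ∈ (T_uo)^+`; or (4) there is a reachable transition
cycle of `S_obs` no state of which is a singleton. -/
theorem not_spd_iff_observer {X T O : Type} [Fintype X] [Fintype T] [Fintype O]
    (M : FSA X T O) :
    ¬ M.SPD ↔
      ((∃ q : Set X, M.ObsReachable q ∧ 1 < q.ncard ∧
          ∃ x ∈ q, ∃ (x' : X) (s1 s2 : List T),
            M.UnobsRun x s1 x' ∧ s2 ≠ [] ∧ M.UnobsRun x' s2 x') ∨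
       (∃ (n : ℕ), 0 < n ∧ ∃ (q : Fin (n + 1) → Set X) (σ : Fin n → O),
          M.ObsReachable (q 0) ∧ q 0 = q (Fin.last n) ∧
          (∀ i : Fin n, M.obsTrans (q i.castSucc) (σ i) (q i.succ)) ∧
          ∀ i : Fin (n + 1), (q i).ncard ≠ 1)) :=
  not_spd_iff_observer_general M
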